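/- For every peak set P ⊆ {2, ..., n-1} (a set with no two consecutive elements), the set of compositions I of n with HP(I) = P is nonempty; moreover, among compositions ordered by refinement of descent sets (I ≤ J iff Des(I) ⊆ Des(J)), this set has a unique minimal element and a unique maximal element. -/
import Mathlib


/-- The descent set of a composition `c` of `n`. -/
def descentSet {n : ℕ} (c : Composition n) : Finset ℕ :=
  (Finset.Ico 1 c.length).image c.sizeUpTo

/-- The peak set of a composition `c`: `{a ∈ Des(c) : a ≠ 1 and a - 1 ∉ Des(c)}`. -/
def peakSet {n : ℕ} (c : Composition n) : Finset ℕ :=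
  (descentSet c).filter (fun a => a ≠ 1 ∧ a - 1 ∉ descentSet c)

lemma mem_descentSet {n : ℕ} {c : Composition n} {a : ℕ} :
    a ∈ descentSet c ↔ ∃ i, 1 ≤ i ∧ i < c.length ∧ c.sizeUpTo i = a := by
  simp only [descentSet, Finset.mem_image, Finset.mem_Ico]
  tauto

lemma mem_peakSet {n : ℕ} {c : Composition n} {a : ℕ} :
    a ∈ peakSet c ↔ a ∈ descentSet c ∧ a ≠ 1 ∧ a - 1 ∉ descentSet c :=
  Finset.mem_filter

lemma peakSet_subset {n : ℕ} (c : Composition n) : peakSet c ⊆ descentSet c :=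
  Finset.filter_subset _ _

lemma sizeUpTo_pos {n : ℕ} (c : Composition n) {i : ℕ} (h1 : 1 ≤ i) (h2 : i < c.length) :
    1 ≤ c.sizeUpTo i := by
  have h0 : (0 : ℕ) < c.length := lt_of_le_of_lt (Nat.zero_le _) h2
  have h1' : 0 < c.sizeUpTo 1 := by simpa using c.sizeUpTo_strict_mono h0
  have h2' := c.monotone_sizeUpTo h1
  omega

lemma sizeUpTo_lt_n {n : ℕ} (c : Composition n) {i : ℕ} (h2 : i < c.length) :
    c.sizeUpTo i < n :=
  lt_of_lt_of_le (c.sizeUpTo_strict_mono h2) (c.sizeUpTo_le _)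

lemma descentSet_subset_Icc {n : ℕ} (c : Composition n) :
    descentSet c ⊆ Finset.Icc 1 (n - 1) := by
  intro a ha
  rcases mem_descentSet.1 ha with ⟨i, h1, h2, rfl⟩
  have := sizeUpTo_pos c h1 h2
  have := sizeUpTo_lt_n c h2
  simp only [Finset.mem_Icc]
  omega

lemma image_boundaries_eq {n : ℕ} (c : Composition n) :
    c.boundaries.image Fin.val = insert 0 (insert n (descentSet c)) := by
  have key : ∀ a : ℕ, a ∈ c.boundaries.image Fin.val ↔
      ∃ i : Fin (c.length + 1), c.sizeUpTo (i : ℕ) = a := by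
    intro a
    simp only [Composition.boundaries, Finset.mem_image, Finset.mem_map, Finset.mem_univ,
      true_and, Function.Embedding.coe_subtype]
    constructor
    · rintro ⟨j, ⟨i, rfl⟩, rfl⟩
      exact ⟨i, rfl⟩
    · rintro ⟨i, rfl⟩
      exact ⟨c.boundary i, ⟨i, rfl⟩, rfl⟩
  ext a
  rw [key]
  simp only [Finset.mem_insert]
  constructor
  · rintro ⟨i, rfl⟩
    by_cases h0 : (i : ℕ) = 0
    · left; rw [h0, c.sizeUpTo_zero]
    by_cases hl : (i : ℕ) = c.length
    · right; left; rw [hl, c.sizeUpTo_length]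
    · right; right
      exact mem_descentSet.2 ⟨i, by omega, by have := i.2; omega, rfl⟩
  · intro h
    rcases h with h | h | h
    · exact ⟨0, by simp [h]⟩
    · refine ⟨Fin.last c.length, ?_⟩
      rw [Fin.val_last, c.sizeUpTo_length, h]
    · rcases mem_descentSet.1 h with ⟨i, h1, h2, rfl⟩
      exact ⟨⟨i, by omega⟩, rfl⟩

lemma descentSet_injective {n : ℕ} : Function.Injective (descentSet (n := n)) := by
  intro c c' h
  have hb : c.boundaries = c'.boundaries := by
    have := image_boundaries_eq c
    rw [h, ← image_boundaries_eq c'] at this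
    exact Finset.image_injective Fin.val_injective this
  have hcs : c.toCompositionAsSet = c'.toCompositionAsSet := by
    apply CompositionAsSet.ext
    simpa using hb
  have := congrArg CompositionAsSet.blocks hcs
  rw [c.toCompositionAsSet_blocks, c'.toCompositionAsSet_blocks] at this
  exact Composition.ext this

/-- The `CompositionAsSet` whose boundaries are `{0, n} ∪ D`. -/
def descentsCAS (n : ℕ) (D : Finset ℕ) : CompositionAsSet n where
  boundaries := Finset.univ.filter (fun i : Fin (n + 1) => (i : ℕ) = 0 ∨ (i : ℕ) = n ∨ (i : ℕ) ∈ D)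
  zero_mem := by simp
  getLast_mem := by simp [Fin.last]

/-- The composition of `n` with descent set `D` (for `D ⊆ Icc 1 (n-1)`). -/
def ofDescents (n : ℕ) (D : Finset ℕ) : Composition n :=
  (descentsCAS n D).toComposition

lemma descentSet_ofDescents {n : ℕ} (hn : 1 ≤ n) {D : Finset ℕ}
    (hD : D ⊆ Finset.Icc 1 (n - 1)) : descentSet (ofDescents n D) = D := by
  have hb : (ofDescents n D).boundaries = (descentsCAS n D).boundaries :=
    CompositionAsSet.toComposition_boundaries _
  have him : (ofDescents n D).boundaries.image Fin.val
      = (descentsCAS n D).boundaries.image Fin.val := by rw [hb]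
  rw [image_boundaries_eq] at him
  ext a
  constructor
  · intro ha
    have h1 : a ∈ insert 0 (insert n (descentSet (ofDescents n D))) := by simp [ha]
    rw [him] at h1
    simp only [descentsCAS, Finset.mem_image, Finset.mem_filter, Finset.mem_univ,
      true_and] at h1
    obtain ⟨i, hi, rfl⟩ := h1
    have := descentSet_subset_Icc _ ha
    simp only [Finset.mem_Icc] at this
    rcases hi with h | h | h
    · omega
    · omega
    · exact h
  · intro ha
    have haIcc := hD ha
    simp only [Finset.mem_Icc] at haIcc
    have h1 : a ∈ (descentsCAS n D).boundaries.image Fin.val := by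
      simp only [descentsCAS, Finset.mem_image, Finset.mem_filter, Finset.mem_univ, true_and]
      exact ⟨⟨a, by omega⟩, Or.inr (Or.inr (by simpa using ha)), rfl⟩
    rw [← him] at h1
    simp only [Finset.mem_insert] at h1
    rcases h1 with h | h | h
    · omega
    · omega
    · exact h

/-- for every peak set `P ⊆ {2,...,n-1}` (no two consecutive
elements), the set of compositions `I` of `n` with `HP(I) = P` is nonempty, and
with respect to the order `I ≤ J ↔ Des(I) ⊆ Des(J)` it has a unique minimal
element and a unique maximal element. -/
theorem peak_class_nonempty_unique_min_max {n : ℕ} (hn : 1 ≤ n)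
    (P : Finset ℕ) (hP : P ⊆ Finset.Icc 2 (n - 1)) (hpk : ∀ a ∈ P, a - 1 ∉ P) :
    (∃ I : Composition n, peakSet I = P) ∧
    (∃! Imin : Composition n, peakSet Imin = P ∧
        ∀ J : Composition n, peakSet J = P → descentSet Imin ⊆ descentSet J) ∧
    (∃! Imax : Composition n, peakSet Imax = P ∧
        ∀ J : Composition n, peakSet J = P → descentSet J ⊆ descentSet Imax) := by
  have hPbounds : ∀ a ∈ P, 2 ≤ a ∧ a ≤ n - 1 := by
    intro a ha
    have := hP ha
    simp only [Finset.mem_Icc] at this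
    exact this
  have hP' : P ⊆ Finset.Icc 1 (n - 1) := by
    intro a ha
    have := hPbounds a ha
    simp only [Finset.mem_Icc]
    omega
  set Dmax : Finset ℕ := Finset.Icc 1 (n - 1) \ P.image (· - 1) with hDmaxdef
  have hDmax' : Dmax ⊆ Finset.Icc 1 (n - 1) := Finset.sdiff_subset
  set Imin := ofDescents n P with hImin
  set Imax := ofDescents n Dmax with hImax
  have hdmin : descentSet Imin = P := descentSet_ofDescents hn hP'
  have hdmax : descentSet Imax = Dmax := descentSet_ofDescents hn hDmax'
  -- peak set of Imin
  have hpmin : peakSet Imin = P := by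
    rw [peakSet, hdmin]
    apply Finset.filter_true_of_mem
    intro a ha
    have := hPbounds a ha
    exact ⟨by omega, hpk a ha⟩
  -- membership in Dmax
  have hmemDmax : ∀ a : ℕ, a ∈ Dmax ↔ (1 ≤ a ∧ a ≤ n - 1 ∧ ∀ b ∈ P, b - 1 ≠ a) := by
    intro a
    simp only [hDmaxdef, Finset.mem_sdiff, Finset.mem_Icc, Finset.mem_image, not_exists, not_and]
    tauto
  -- peak set of Imax
  have hpmax : peakSet Imax = P := by
    ext a
    rw [mem_peakSet, hdmax]
    constructor
    · rintro ⟨haD, hane1, ha1D⟩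
      rw [hmemDmax] at haD
      obtain ⟨h1, h2, h3⟩ := haD
      -- a ≥ 2, a-1 ∉ Dmax means a-1 = b-1 for some b ∈ P, so b = a
      rw [hmemDmax] at ha1D
      push_neg at ha1D
      have h4 := ha1D (by omega) (by omega)
      obtain ⟨b, hb, hba⟩ := h4
      have hbb := hPbounds b hb
      have : b = a := by omega
      rwa [← this]
    · intro ha
      obtain ⟨ha2, han⟩ := hPbounds a ha
      refine ⟨?_, by omega, ?_⟩
      · rw [hmemDmax]
        refine ⟨by omega, by omega, fun b hb hba => ?_⟩
        have hb2 := (hPbounds b hb).1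
        exact (hba ▸ hpk b hb) ha
      · rw [hmemDmax]
        push_neg
        intro _ _
        exact ⟨a, ha, rfl⟩
  -- maximality of Dmax
  have hmaxbound : ∀ J : Composition n, peakSet J = P → descentSet J ⊆ descentSet Imax := by
    intro J hJ a haJ
    rw [hdmax, hmemDmax]
    have := descentSet_subset_Icc J haJ
    simp only [Finset.mem_Icc] at this
    refine ⟨this.1, this.2, ?_⟩
    intro b hb hba
    rw [← hJ] at hb
    have := (mem_peakSet.1 hb).2.2
    rw [hba] at this
    exact this haJ
  have hminbound : ∀ J : Composition n, peakSet J = P → descentSet Imin ⊆ descentSet J := by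
    intro J hJ
    rw [hdmin, ← hJ]
    exact peakSet_subset J
  refine ⟨⟨Imin, hpmin⟩, ⟨Imin, ⟨hpmin, hminbound⟩, ?_⟩, ⟨Imax, ⟨hpmax, hmaxbound⟩, ?_⟩⟩
  · rintro I' ⟨hI'p, hI'min⟩
    apply descentSet_injective
    exact Finset.Subset.antisymm (hI'min Imin hpmin) (hminbound I' hI'p)
  · rintro I' ⟨hI'p, hI'max⟩
    apply descentSet_injective
    exact Finset.Subset.antisymm (hmaxbound I' hI'p) (hI'max Imax hpmax)
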